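/- For any probability measures f, g on E ⊆ ℝ^d and any N ≥ 1, the normalized Monge-Kantorovich distance on E^N built from the cost d_{E^N}(X,Y) = N^{-1} Σᵢ min(|xᵢ-yᵢ|,1) satisfies W₁(f^{⊗N}, g^{⊗N}) = W₁(f,g). -/

import Mathlib

/-!
A coupling `π` of `μ` and `ν` yields the product coupling of `μ^{⊗N}` and `ν^{⊗N}`, whose
averaged cost is exactly the cost of `π`. Conversely, any coupling of `μ^{⊗N}` and `ν^{⊗N}` has,
for each coordinate `i`, a marginal which couples `μ` and `ν`; so its averaged cost is an average
of `N` costs, each at least `W₁(μ, ν)`.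
-/

open MeasureTheory ENNReal

noncomputable section

/-- Monge–Kantorovich transport "distance" with general cost `c`. -/
def Winf {α : Type*} [MeasurableSpace α] (c : α → α → ℝ≥0∞) (μ ν : Measure α) : ℝ≥0∞ :=
  ⨅ (π : Measure (α × α)) (_ : π.map Prod.fst = μ) (_ : π.map Prod.snd = ν),
    ∫⁻ p, c p.1 p.2 ∂π

/-- Truncated distance `d_E(x,y) = min(|x-y|, 1)`. -/
def dE {α : Type*} [PseudoEMetricSpace α] (x y : α) : ℝ≥0∞ := min (edist x y) 1

section Coupling

variable {α : Type*} [MeasurableSpace α]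

theorem Winf_le_lintegral {c : α → α → ℝ≥0∞} {μ ν : Measure α} {π : Measure (α × α)}
    (h₁ : π.map Prod.fst = μ) (h₂ : π.map Prod.snd = ν) :
    Winf c μ ν ≤ ∫⁻ p, c p.1 p.2 ∂π :=
  iInf₂_le_of_le π h₁ (iInf_le _ h₂)

theorem le_Winf {c : α → α → ℝ≥0∞} {μ ν : Measure α} {a : ℝ≥0∞}
    (h : ∀ π : Measure (α × α), π.map Prod.fst = μ → π.map Prod.snd = ν →
      a ≤ ∫⁻ p, c p.1 p.2 ∂π) :
    a ≤ Winf c μ ν :=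
  le_iInf₂ fun π h₁ => le_iInf (h π h₁)

theorem MeasureTheory.lintegral_div_const (μ : Measure α) (f : α → ℝ≥0∞) {r : ℝ≥0∞}
    (hr : r ≠ 0) :
    ∫⁻ x, f x / r ∂μ = (∫⁻ x, f x ∂μ) / r := by
  simp only [div_eq_mul_inv]
  exact lintegral_mul_const' _ _ (ENNReal.inv_ne_top.mpr hr)

theorem ENNReal.sum_const_div_card {ι : Type*} [Fintype ι] [Nonempty ι] (a : ℝ≥0∞) :
    (∑ _i : ι, a) / Fintype.card ι = a := by
  rw [Finset.sum_const, Finset.card_univ, nsmul_eq_mul, mul_comm]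
  exact ENNReal.mul_div_cancel_right (by simp) (natCast_ne_top _)

theorem measurable_dE [PseudoEMetricSpace α] [OpensMeasurableSpace α]
    [SecondCountableTopology α] :
    Measurable fun p : α × α => dE p.1 p.2 :=
  (measurable_fst.edist measurable_snd).min measurable_const

end Coupling

namespace MeasureTheory.Measure

variable {ι α β : Type*} [Fintype ι] [MeasurableSpace α] [MeasurableSpace β]

theorem pi_map_eval_of_isProbabilityMeasure (μ : ι → Measure α)
    [∀ i, IsProbabilityMeasure (μ i)] (i : ι) :
    (Measure.pi μ).map (Function.eval i) = μ i := by
  classical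
  simp [pi_map_eval]

def piCoupling (π : ι → Measure (α × β)) : Measure ((ι → α) × (ι → β)) :=
  (Measure.pi π).map (MeasurableEquiv.arrowProdEquivProdArrow α β ι)

variable (π : ι → Measure (α × β))

theorem piCoupling_map_fst [∀ i, IsFiniteMeasure (π i)] :
    (piCoupling π).map Prod.fst = Measure.pi fun i => (π i).map Prod.fst := by
  rw [piCoupling, map_map measurable_fst (MeasurableEquiv.measurable _)]
  exact pi_map_pi fun _ => measurable_fst.aemeasurable

theorem piCoupling_map_snd [∀ i, IsFiniteMeasure (π i)] :
    (piCoupling π).map Prod.snd = Measure.pi fun i => (π i).map Prod.snd := by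
  rw [piCoupling, map_map measurable_snd (MeasurableEquiv.measurable _)]
  exact pi_map_pi fun _ => measurable_snd.aemeasurable

theorem lintegral_sum_piCoupling [∀ i, IsProbabilityMeasure (π i)] {c : α → β → ℝ≥0∞}
    (hc : Measurable fun p : α × β => c p.1 p.2) :
    ∫⁻ p, ∑ i, c (p.1 i) (p.2 i) ∂piCoupling π = ∑ i, ∫⁻ q, c q.1 q.2 ∂π i := by
  rw [piCoupling, lintegral_map_equiv]
  change ∫⁻ ω : ι → α × β, ∑ i, c (ω i).1 (ω i).2 ∂_ = _
  rw [lintegral_finsetSum' (f := fun i (ω : ι → α × β) => c (ω i).1 (ω i).2) _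
    fun i _ => (hc.comp (measurable_pi_apply i)).aemeasurable]
  refine Finset.sum_congr rfl fun i _ => ?_
  rw [← pi_map_eval_of_isProbabilityMeasure π i, lintegral_map hc (measurable_pi_apply i)]

end MeasureTheory.Measure

section Tensorization

open Measure

variable {ι α : Type*} [Fintype ι] [MeasurableSpace α] {μ ν : Measure α}
  [IsProbabilityMeasure μ] [IsProbabilityMeasure ν]

theorem Winf_le_lintegral_eval (c : α → α → ℝ≥0∞) {P : Measure ((ι → α) × (ι → α))}
    (h₁ : P.map Prod.fst = Measure.pi fun _ => μ) (h₂ : P.map Prod.snd = Measure.pi fun _ => ν)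
    (i : ι) :
    Winf c μ ν ≤ ∫⁻ p, c (p.1 i) (p.2 i) ∂P := by
  have hφ : Measurable fun p : (ι → α) × (ι → α) => (p.1 i, p.2 i) :=
    (measurable_pi_apply i).prodMap (measurable_pi_apply i)
  have hmarg {m : Measure α} [IsProbabilityMeasure m] {g : (ι → α) × (ι → α) → ι → α}
      (hg : Measurable g) (h : P.map g = Measure.pi fun _ => m) :
      P.map (fun p => g p i) = m := by
    rw [← pi_map_eval_of_isProbabilityMeasure (fun _ => m) i, ← h, map_map (by fun_prop) hg]
    rfl
  calc Winf c μ ν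
      ≤ ∫⁻ q, c q.1 q.2 ∂P.map fun p => (p.1 i, p.2 i) :=
        Winf_le_lintegral
          (by rw [map_map measurable_fst hφ]; exact hmarg measurable_fst h₁)
          (by rw [map_map measurable_snd hφ]; exact hmarg measurable_snd h₂)
    _ ≤ ∫⁻ p, c (p.1 i) (p.2 i) ∂P := lintegral_map_le _ _

variable [Nonempty ι]

theorem Winf_pi_avg_eq (c : α → α → ℝ≥0∞) (hc : Measurable fun p : α × α => c p.1 p.2) :
    Winf (fun X Y : ι → α => (∑ i, c (X i) (Y i)) / Fintype.card ι)
      (Measure.pi fun _ => μ) (Measure.pi fun _ => ν) = Winf c μ ν := by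
  have hn₀ : (Fintype.card ι : ℝ≥0∞) ≠ 0 := by simp
  apply le_antisymm
  · refine le_Winf fun π h₁ h₂ => ?_
    have : IsProbabilityMeasure (π.map Prod.fst) := h₁ ▸ inferInstance
    have : IsProbabilityMeasure π := isProbabilityMeasure_of_map Prod.fst
    calc _ ≤ ∫⁻ p, (∑ i, c (p.1 i) (p.2 i)) / Fintype.card ι ∂piCoupling fun _ : ι => π :=
          Winf_le_lintegral (by rw [piCoupling_map_fst, h₁]) (by rw [piCoupling_map_snd, h₂])
      _ = (∑ _i : ι, ∫⁻ q, c q.1 q.2 ∂π) / Fintype.card ι := by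
          rw [lintegral_div_const _ _ hn₀, lintegral_sum_piCoupling _ hc]
      _ = ∫⁻ q, c q.1 q.2 ∂π := ENNReal.sum_const_div_card _
  · refine le_Winf fun P h₁ h₂ => ?_
    calc Winf c μ ν = (∑ _i : ι, Winf c μ ν) / Fintype.card ι :=
          (ENNReal.sum_const_div_card _).symm
      _ ≤ (∑ i, ∫⁻ p, c (p.1 i) (p.2 i) ∂P) / Fintype.card ι := by
          gcongr with i
          exact Winf_le_lintegral_eval c h₁ h₂ i
      _ = ∫⁻ p, (∑ i, c (p.1 i) (p.2 i)) / Fintype.card ι ∂P := by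
          rw [lintegral_div_const _ _ hn₀,
            lintegral_finsetSum' (f := fun i (p : (ι → α) × (ι → α)) => c (p.1 i) (p.2 i)) _
              fun i _ => (hc.comp (f := fun p : (ι → α) × (ι → α) => (p.1 i, p.2 i))
                (by fun_prop)).aemeasurable]

end Tensorization

/-- For any `N ≥ 1` and probability measures `f, g` on `E ⊆ ℝ^d`, the normalized
MKW distance on `E^N` with cost `(1/N) Σᵢ min(|xᵢ-yᵢ|,1)` satisfies
`W₁(f^{⊗N}, g^{⊗N}) = W₁(f,g)`. -/
theorem stmt1 (d N : ℕ) (hN : 1 ≤ N)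
    (f g : Measure (EuclideanSpace ℝ (Fin d)))
    [IsProbabilityMeasure f] [IsProbabilityMeasure g] :
    Winf (fun X Y : Fin N → EuclideanSpace ℝ (Fin d) => (∑ i, dE (X i) (Y i)) / N)
        (Measure.pi fun _ => f) (Measure.pi fun _ => g) = Winf dE f g := by
  have : Nonempty (Fin N) := ⟨⟨0, hN⟩⟩
  simpa using Winf_pi_avg_eq (ι := Fin N) (μ := f) (ν := g) dE measurable_dE
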